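/- Construct a simple (undirected) graph 𝓗 on the vertex set V∖(S ∪ Pa↔(S)) by joining two distinct vertices a and b with an edge whenever S ∪ {a, b} is a hedge formed for Q[S] in G[V∖Pa↔(S)]. Then 𝓗 is bipartite (2-colorable); in fact every edge of 𝓗 joins a vertex of Pa(S)∖Bid(S) to a vertex of Bid(S)∖Pa(S). -/

import Mathlib

/-- A semi-Markovian graph on vertex type `V`: a DAG of directed edges together with a
symmetric irreflexive relation of bidirected edges. `dir x y` means there is a directed
edge from `x` to `y`, i.e. `x` is a parent of `y`. -/
structure SemiMarkovian (V : Type*) where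
  dir : V → V → Prop
  bid : V → V → Prop
  bid_symm : ∀ x y, bid x y → bid y x
  bid_irrefl : ∀ x, ¬ bid x x
  acyclic : ∀ x, ¬ Relation.TransGen dir x x

namespace SemiMarkovian

variable {V : Type*}

/-- The induced subgraph of `G` on the vertex set `W`. -/
def induce (G : SemiMarkovian V) (W : Set V) : SemiMarkovian V where
  dir a b := a ∈ W ∧ b ∈ W ∧ G.dir a b
  bid a b := a ∈ W ∧ b ∈ W ∧ G.bid a b
  bid_symm := fun x y h => ⟨h.2.1, h.1, G.bid_symm x y h.2.2⟩
  bid_irrefl := fun x h => G.bid_irrefl x h.2.2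
  acyclic := fun x h =>
    G.acyclic x (by
      have key : ∀ a b, Relation.TransGen (fun a b => a ∈ W ∧ b ∈ W ∧ G.dir a b) a b →
          Relation.TransGen G.dir a b := by
        intro a b h
        induction h with
        | single hab => exact .single hab.2.2
        | tail _ hab ih => exact ih.tail hab.2.2
      exact key x x h)

/-- There is a directed path (possibly of length zero) from `x` to `y` all of whose
vertices lie in `F`. -/
def DirPathIn (G : SemiMarkovian V) (F : Set V) (x y : V) : Prop :=
  x ∈ F ∧ Relation.ReflTransGen (fun a b => b ∈ F ∧ G.dir a b) x y

/-- `x` and `y` are joined by a path of bidirected edges all of whose vertices lie in `F`. -/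
def BidConnIn (G : SemiMarkovian V) (F : Set V) (x y : V) : Prop :=
  x ∈ F ∧ Relation.ReflTransGen (fun a b => b ∈ F ∧ G.bid a b) x y

/-- `x` is an ancestor of the set `S` in `G[F]`. -/
def AncestorIn (G : SemiMarkovian V) (F S : Set V) (x : V) : Prop :=
  ∃ s ∈ S, G.DirPathIn F x s

/-- `G[F]` is a c-component: any two vertices of `F` are joined by a path of bidirected
edges all of whose vertices lie in `F`. -/
def CComponent (G : SemiMarkovian V) (F : Set V) : Prop :=
  ∀ x ∈ F, ∀ y ∈ F, G.BidConnIn F x y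

/-- `F` is a hedge formed for `Q[S]` in `G`: `S ⊊ F`, every vertex of `F` is an ancestor of
`S` in `G[F]`, and `G[F]` is a c-component. -/
def IsHedge (G : SemiMarkovian V) (S F : Set V) : Prop :=
  S ⊂ F ∧ (∀ x ∈ F, G.AncestorIn F S x) ∧ G.CComponent F

/-- The hedge hull of `S` in `G`: the union of `S` with all hedges formed for `Q[S]` in `G`. -/
def Hhull (G : SemiMarkovian V) (S : Set V) : Set V :=
  S ∪ ⋃₀ {F | G.IsHedge S F}

/-- Vertices outside `S` that are parents of some vertex of `S`. -/
def Pa (G : SemiMarkovian V) (S : Set V) : Set V :=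
  {x | x ∉ S ∧ ∃ s ∈ S, G.dir x s}

/-- Vertices outside `S` that have a bidirected edge to some vertex of `S`. -/
def Bid (G : SemiMarkovian V) (S : Set V) : Set V :=
  {x | x ∉ S ∧ ∃ s ∈ S, G.bid x s}

/-- `Pa↔(S) := Pa(S) ∩ Bid(S)`. -/
def PaBid (G : SemiMarkovian V) (S : Set V) : Set V := G.Pa S ∩ G.Bid S

end SemiMarkovian

/-- If a path for relation `r` starts in `{a,b}` and ends in `S`, where `a, b ∉ S` and
every `r`-step lands in `S ∪ {a,b}`, then some step goes from `{a,b}` into `S`. -/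
lemma extract_step {V : Type*} {S : Set V} {a b : V} (ha : a ∉ S) (hb : b ∉ S)
    (r : V → V → Prop) (hr : ∀ p q, r p q → q ∈ S ∪ {a, b}) {x y : V}
    (h : Relation.ReflTransGen r x y) (hy : y ∈ S) :
    x ∈ ({a, b} : Set V) → ∃ p ∈ ({a, b} : Set V), ∃ q ∈ S, r p q := by
  induction h using Relation.ReflTransGen.head_induction_on with
  | refl =>
    intro hx
    rcases hx with rfl | rfl
    · exact absurd hy ha
    · exact absurd hy hb
  | head hstep htail ih =>
    intro hx
    rcases hr _ _ hstep with hq | hq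
    · exact ⟨_, hx, _, hq, hstep⟩
    · exact ih hq

/-- The simple graph `𝓗` on `V∖(S ∪ Pa↔(S))` joining `a` and `b` whenever
`S ∪ {a, b}` is a hedge formed for `Q[S]` in `G[V∖Pa↔(S)]` is bipartite (2-colorable);
in fact every edge joins a vertex of `Pa(S)∖Bid(S)` to a vertex of `Bid(S)∖Pa(S)`. -/
theorem size_two_hedge_graph_bipartite {V : Type*} [Fintype V] (G : SemiMarkovian V)
    (S : Set V) (hS : G.CComponent S) (𝓗 : SimpleGraph V)
    (hadj : ∀ a b : V, 𝓗.Adj a b ↔ a ≠ b ∧ a ∈ (S ∪ G.PaBid S)ᶜ ∧ b ∈ (S ∪ G.PaBid S)ᶜ ∧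
      (G.induce (G.PaBid S)ᶜ).IsHedge S (S ∪ {a, b})) :
    𝓗.Colorable 2 ∧
      ∀ a b : V, 𝓗.Adj a b →
        (a ∈ G.Pa S \ G.Bid S ∧ b ∈ G.Bid S \ G.Pa S) ∨
        (b ∈ G.Pa S \ G.Bid S ∧ a ∈ G.Bid S \ G.Pa S) := by
  classical
  have key : ∀ a b : V, 𝓗.Adj a b →
      (a ∈ G.Pa S \ G.Bid S ∧ b ∈ G.Bid S \ G.Pa S) ∨
      (b ∈ G.Pa S \ G.Bid S ∧ a ∈ G.Bid S \ G.Pa S) := by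
    intro a b hab
    rw [hadj] at hab
    obtain ⟨hne, hamem, hbmem, hsub, hanc, hcc⟩ := hab
    set F : Set V := S ∪ {a, b} with hF
    have haS : a ∉ S := fun h => hamem (Or.inl h)
    have hbS : b ∉ S := fun h => hbmem (Or.inl h)
    have haPB : a ∉ G.PaBid S := fun h => hamem (Or.inr h)
    have hbPB : b ∉ G.PaBid S := fun h => hbmem (Or.inr h)
    have haF : a ∈ F := Or.inr (Or.inl rfl)
    have hbF : b ∈ F := Or.inr (Or.inr rfl)
    -- from the directed-ancestor condition on a : some vertex of {a,b} is a parent of S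
    obtain ⟨s, hsS, haF', hpath⟩ := hanc a haF
    have hsF : s ∈ F := Or.inl hsS
    have hPa : a ∈ G.Pa S ∨ b ∈ G.Pa S := by
      obtain ⟨p, hp, q, hq, hr⟩ := extract_step haS hbS _
        (fun p q h => h.1) hpath hsS (Or.inl rfl)
      have hdir : G.dir p q := (show _ ∧ _ ∧ G.dir p q from hr.2).2.2
      rcases hp with rfl | rfl
      · exact Or.inl ⟨haS, q, hq, hdir⟩
      · exact Or.inr ⟨hbS, q, hq, hdir⟩
    -- from the c-component condition : some vertex of {a,b} has a bidirected edge to S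
    obtain ⟨_, hbidpath⟩ := hcc a haF s hsF
    have hBid : a ∈ G.Bid S ∨ b ∈ G.Bid S := by
      obtain ⟨p, hp, q, hq, hr⟩ := extract_step haS hbS _
        (fun p q h => h.1) hbidpath hsS (Or.inl rfl)
      have hbid : G.bid p q := (show _ ∧ _ ∧ G.bid p q from hr.2).2.2
      rcases hp with rfl | rfl
      · exact Or.inl ⟨haS, q, hq, hbid⟩
      · exact Or.inr ⟨hbS, q, hq, hbid⟩
    rcases hPa with hpa | hpb
    · have hanb : a ∉ G.Bid S := fun h => haPB ⟨hpa, h⟩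
      rcases hBid with hba | hbb
      · exact absurd hba hanb
      · exact Or.inl ⟨⟨hpa, hanb⟩, hbb, fun h => hbPB ⟨h, hbb⟩⟩
    · have hbnb : b ∉ G.Bid S := fun h => hbPB ⟨hpb, h⟩
      rcases hBid with hba | hbb
      · exact Or.inr ⟨⟨hpb, hbnb⟩, hba, fun h => haPB ⟨h, hba⟩⟩
      · exact absurd hbb hbnb
  refine ⟨?_, key⟩
  refine ⟨SimpleGraph.Coloring.mk
    (fun v => if v ∈ G.Pa S \ G.Bid S then 0 else 1) ?_⟩
  intro a b hab
  rcases key a b hab with ⟨h1, h2⟩ | ⟨h1, h2⟩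
  · simp only [if_pos h1, if_neg (fun h : b ∈ G.Pa S \ G.Bid S => h.2 h2.1)]
    exact zero_ne_one
  · simp only [if_neg (fun h : a ∈ G.Pa S \ G.Bid S => h.2 h2.1), if_pos h1]
    exact one_ne_zero
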